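/- Let Σ be a smooth compact manifold without boundary, Y a smooth vector field and Q, ψ smooth real functions on Σ (with a fixed Riemannian metric) such that −Q + |Y|² ≤ div Y pointwise. Then ∫_Σ (|∇ψ|² + Qψ²) ≥ 0. -/
import Mathlib


/-- Abstract calculus data of a closed (compact, boundaryless) Riemannian manifold `M`
with space of smooth vector fields `VF`: gradient, divergence, pointwise inner product
of vector fields, multiplication of vector fields by functions, and integration against
the Riemannian volume measure, satisfying the Leibniz rule, the pointwise
Cauchy–Schwarz inequality, the chain rule for `grad ψ²`, linearity and monotonicity of
the integral, and the divergence theorem `∫ div Z = 0` (no boundary terms). -/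
structure ClosedRiemannianCalc (M : Type*) (VF : Type*) where
  grad : (M → ℝ) → VF
  div : VF → M → ℝ
  vinner : VF → VF → M → ℝ
  fsmul : (M → ℝ) → VF → VF
  integral : (M → ℝ) → ℝ
  vinner_comm : ∀ v w x, vinner v w x = vinner w v x
  vinner_nonneg : ∀ v x, 0 ≤ vinner v v x
  cauchy_schwarz : ∀ v w x, (vinner v w x) ^ 2 ≤ vinner v v x * vinner w w x
  leibniz : ∀ (f : M → ℝ) (Z : VF) (x : M),
    div (fsmul f Z) x = f x * div Z x + vinner (grad f) Z x
  grad_sq : ∀ ψ : M → ℝ, grad (fun x => ψ x ^ 2) = fsmul (fun x => 2 * ψ x) (grad ψ)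
  vinner_fsmul : ∀ (f : M → ℝ) (v w : VF) (x : M),
    vinner (fsmul f v) w x = f x * vinner v w x
  integral_add : ∀ f g : M → ℝ,
    integral (fun x => f x + g x) = integral f + integral g
  integral_const_mul : ∀ (c : ℝ) (f : M → ℝ),
    integral (fun x => c * f x) = c * integral f
  integral_mono : ∀ f g : M → ℝ, (∀ x, f x ≤ g x) → integral f ≤ integral g
  divergence_theorem : ∀ Z : VF, integral (div Z) = 0

lemma amgm_aux (g y a p : ℝ) (hcs : a ^ 2 ≤ g * y) (hg : 0 ≤ g) (hy : 0 ≤ y) :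
    -(g + p ^ 2 * y) ≤ 2 * p * a := by
  have h1 : (2 * p * a) ^ 2 ≤ (g + p ^ 2 * y) ^ 2 := by
    nlinarith [sq_nonneg (g - p ^ 2 * y), mul_le_mul_of_nonneg_left hcs (sq_nonneg p)]
  have h2 : 0 ≤ g + p ^ 2 * y := by positivity
  nlinarith [h1, h2]

/-- on a closed Riemannian manifold, if `−Q + |Y|² ≤ div Y` pointwise,
then `∫ (|∇ψ|² + Qψ²) ≥ 0` for every smooth `ψ`. -/
theorem stmt_9 {M VF : Type*} (C : ClosedRiemannianCalc M VF)
    (Y : VF) (Q ψ : M → ℝ)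
    (h : ∀ x, -Q x + C.vinner Y Y x ≤ C.div Y x) :
    0 ≤ C.integral (fun x => C.vinner (C.grad ψ) (C.grad ψ) x + Q x * ψ x ^ 2) := by
  set Z : VF := C.fsmul (fun x => ψ x ^ 2) Y with hZ
  have key : ∀ x, (-1 : ℝ) * (C.vinner (C.grad ψ) (C.grad ψ) x + Q x * ψ x ^ 2)
      ≤ C.div Z x := by
    intro x
    have hdiv : C.div Z x = ψ x ^ 2 * C.div Y x
        + C.vinner (C.grad (fun x => ψ x ^ 2)) Y x := C.leibniz _ Y x
    have hg : C.vinner (C.grad (fun x => ψ x ^ 2)) Y x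
        = 2 * ψ x * C.vinner (C.grad ψ) Y x := by
      rw [C.grad_sq, C.vinner_fsmul]
    have hcs := C.cauchy_schwarz (C.grad ψ) Y x
    have hgn := C.vinner_nonneg (C.grad ψ) x
    have hyn := C.vinner_nonneg Y x
    have hpsin : (0:ℝ) ≤ ψ x ^ 2 := sq_nonneg _
    have hdY := h x
    have h1 : ψ x ^ 2 * (-Q x + C.vinner Y Y x) ≤ ψ x ^ 2 * C.div Y x :=
      mul_le_mul_of_nonneg_left hdY hpsin
    have h2 : -(C.vinner (C.grad ψ) (C.grad ψ) x + ψ x ^ 2 * C.vinner Y Y x)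
        ≤ 2 * ψ x * C.vinner (C.grad ψ) Y x := by
      have := amgm_aux (C.vinner (C.grad ψ) (C.grad ψ) x) (C.vinner Y Y x)
        (C.vinner (C.grad ψ) Y x) (ψ x) hcs hgn hyn
      linarith
    rw [hdiv, hg]
    nlinarith [h1, h2]
  have hint := C.integral_mono _ _ key
  rw [C.divergence_theorem, C.integral_const_mul] at hint
  linarith
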